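/- Under the hypotheses of the M=2 implicit solution (V differentiable with 2(3T+2)V² + 2YV + Y²/(3T+2) = cT + X, 3T+2 ≠ 0, 2(3T+2)V + Y ≠ 0), define p = −Y/(3T+2) − V and a = −c·V·(V + Y/(3T+2)) = c·V·p. Then a_Y = 2·(a·(p + V))_X. -/

import Mathlib

noncomputable def dX (F : ℝ × ℝ × ℝ → ℝ) (z : ℝ × ℝ × ℝ) : ℝ := fderiv ℝ F z (1, 0, 0)
noncomputable def dY (F : ℝ × ℝ × ℝ → ℝ) (z : ℝ × ℝ × ℝ) : ℝ := fderiv ℝ F z (0, 1, 0)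

/-!
Differentiating the implicit relation along the `X`- and `Y`-lines through a point gives
`V_X · 2N = 1` and `V_Y · 2N + 2V + 2Y/(3T+2) = 0` with `N = 2(3T+2)V + Y`. Both sides of the
source equation are computed on the same lines by the one-variable chain rule, and their difference
is a linear combination of these two identities.
-/

open Filter Topology

section PartialDerivatives

variable {F : ℝ × ℝ × ℝ → ℝ} {z : ℝ × ℝ × ℝ}

theorem DifferentiableAt.hasDerivAt_dX (hF : DifferentiableAt ℝ F z) :
    HasDerivAt (fun x => F (x, z.2)) (dX F z) z.1 :=
  hF.hasFDerivAt.comp_hasDerivAt (x := z.1) ((hasDerivAt_id _).prodMk (hasDerivAt_const _ _))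

theorem DifferentiableAt.hasDerivAt_dY (hF : DifferentiableAt ℝ F z) :
    HasDerivAt (fun y => F (z.1, y, z.2.2)) (dY F z) z.2.1 :=
  hF.hasFDerivAt.comp_hasDerivAt (x := z.2.1)
    ((hasDerivAt_const _ _).prodMk ((hasDerivAt_id _).prodMk (hasDerivAt_const _ _)))

theorem IsOpen.eventually_mem_X_slice {U : Set (ℝ × ℝ × ℝ)} (hU : IsOpen U) (hz : z ∈ U) :
    ∀ᶠ x in 𝓝 z.1, (x, z.2) ∈ U :=
  (continuous_id.prodMk continuous_const).continuousAt.preimage_mem_nhds (hU.mem_nhds hz)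

theorem IsOpen.eventually_mem_Y_slice {U : Set (ℝ × ℝ × ℝ)} (hU : IsOpen U) (hz : z ∈ U) :
    ∀ᶠ y in 𝓝 z.2.1, (z.1, y, z.2.2) ∈ U :=
  (continuous_const.prodMk (continuous_id.prodMk continuous_const)).continuousAt.preimage_mem_nhds
    (hU.mem_nhds hz)

end PartialDerivatives

section ImplicitDifferentiation

variable {v : ℝ → ℝ} {v' t₀ A B C D : ℝ}

theorem HasDerivAt.implicit_of_quadratic_eq_const_add (hv : HasDerivAt v v' t₀)
    (h : ∀ᶠ t in 𝓝 t₀, A * v t ^ 2 + B * v t + D = C + t) :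
    v' * (2 * A * v t₀ + B) = 1 := by
  have hlhs := (((hv.pow 2).const_mul A).add (hv.const_mul B)).add_const D
  have hrhs := (hasDerivAt_id t₀).const_add C
  linear_combination hlhs.unique (hrhs.congr_of_eventuallyEq h)

theorem HasDerivAt.implicit_of_quadratic_form_eq_const (hv : HasDerivAt v v' t₀)
    (h : ∀ᶠ t in 𝓝 t₀, A * v t ^ 2 + B * t * v t + D * t ^ 2 = C) :
    v' * (2 * A * v t₀ + B * t₀) + B * v t₀ + 2 * D * t₀ = 0 := by
  have hlhs := (((hv.pow 2).const_mul A).add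
    ((((hasDerivAt_id t₀).const_mul B).mul hv))).add ((hasDerivAt_pow 2 t₀).const_mul D)
  have := hlhs.unique ((hasDerivAt_const t₀ C).congr_of_eventuallyEq h)
  simp only [id] at this
  linear_combination this

end ImplicitDifferentiation

section SourceEquation

variable {c X Y T : ℝ} {V : ℝ × ℝ × ℝ → ℝ}

theorem dY_amplitude (hV : DifferentiableAt ℝ V (X, Y, T)) (hK : 3 * T + 2 ≠ 0) :
    dY (fun w => -c * V w * (V w + w.2.1 / (3 * w.2.2 + 2))) (X, Y, T)
      = -c * (dY V (X, Y, T) * (2 * V (X, Y, T) + Y / (3 * T + 2)) + V (X, Y, T) / (3 * T + 2)) := by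
  have ha : DifferentiableAt ℝ (fun w : ℝ × ℝ × ℝ => -c * V w * (V w + w.2.1 / (3 * w.2.2 + 2)))
      (X, Y, T) := by
    fun_prop (disch := assumption)
  have := ha.hasDerivAt_dY.unique ((hV.hasDerivAt_dY.const_mul (-c)).mul
    (hV.hasDerivAt_dY.add ((hasDerivAt_id Y).div_const (3 * T + 2))))
  linear_combination this

theorem dX_flux (hV : DifferentiableAt ℝ V (X, Y, T)) (hK : 3 * T + 2 ≠ 0) :
    dX (fun w => -c * V w * (V w + w.2.1 / (3 * w.2.2 + 2)) * (-w.2.1 / (3 * w.2.2 + 2) - V w + V w))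
        (X, Y, T)
      = c * Y / (3 * T + 2) * dX V (X, Y, T) * (2 * V (X, Y, T) + Y / (3 * T + 2)) := by
  have hflux : DifferentiableAt ℝ (fun w : ℝ × ℝ × ℝ => -c * V w * (V w + w.2.1 / (3 * w.2.2 + 2))
      * (-w.2.1 / (3 * w.2.2 + 2) - V w + V w)) (X, Y, T) := by
    fun_prop (disch := assumption)
  have := hflux.hasDerivAt_dX.unique
    (((hV.hasDerivAt_dX.const_mul (-c)).mul (hV.hasDerivAt_dX.add_const (Y / (3 * T + 2)))).mul
      (((hasDerivAt_const X (-Y / (3 * T + 2))).sub hV.hasDerivAt_dX).add hV.hasDerivAt_dX))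
  linear_combination this

end SourceEquation

theorem m2_source_equation_a_general (c : ℝ) (U : Set (ℝ × ℝ × ℝ)) (hU : IsOpen U)
    (V : ℝ × ℝ × ℝ → ℝ) (hV : ∀ z ∈ U, DifferentiableAt ℝ V z)
    (hT : ∀ z ∈ U, 3 * z.2.2 + 2 ≠ 0)
    (hrel : ∀ z ∈ U,
      2 * (3 * z.2.2 + 2) * (V z) ^ 2 + 2 * z.2.1 * V z
        + z.2.1 ^ 2 / (3 * z.2.2 + 2) = c * z.2.2 + z.1)
    (p a : ℝ × ℝ × ℝ → ℝ)
    (hp : p = fun z => -z.2.1 / (3 * z.2.2 + 2) - V z)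
    (ha : a = fun z => -c * V z * (V z + z.2.1 / (3 * z.2.2 + 2))) :
    ∀ z ∈ U, dY a z = 2 * dX (fun w => a w * (p w + V w)) z := by
  subst hp ha
  rintro ⟨X, Y, T⟩ hz
  have hK : 3 * T + 2 ≠ 0 := hT _ hz
  have hVz := hV _ hz
  have hVX : dX V (X, Y, T) * (2 * (2 * (3 * T + 2)) * V (X, Y, T) + 2 * Y) = 1 :=
    hVz.hasDerivAt_dX.implicit_of_quadratic_eq_const_add
      ((hU.eventually_mem_X_slice hz).mono fun x hx => by simpa only using hrel _ hx)
  have hVY : dY V (X, Y, T) * (2 * (2 * (3 * T + 2)) * V (X, Y, T) + 2 * Y)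
      + 2 * V (X, Y, T) + 2 * (3 * T + 2)⁻¹ * Y = 0 :=
    hVz.hasDerivAt_dY.implicit_of_quadratic_form_eq_const
      ((hU.eventually_mem_Y_slice hz).mono fun y hy => by
        simpa only [div_eq_inv_mul] using hrel _ hy)
  rw [dY_amplitude hVz hK, dX_flux hVz hK]
  linear_combination (norm := (field_simp; ring)) (-c / (2 * (3 * T + 2))) * hVY
    - (c * Y / (3 * T + 2) ^ 2) * hVX

/-- Points are `z = (X, Y, T)`, so `z.1 = X`, `z.2.1 = Y`, `z.2.2 = T`. -/
theorem m2_source_equation_a (c : ℝ) (U : Set (ℝ × ℝ × ℝ)) (hU : IsOpen U)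
    (V : ℝ × ℝ × ℝ → ℝ) (hV : ∀ z ∈ U, DifferentiableAt ℝ V z)
    (hT : ∀ z ∈ U, 3 * z.2.2 + 2 ≠ 0)
    (hrel : ∀ z ∈ U,
      2 * (3 * z.2.2 + 2) * (V z) ^ 2 + 2 * z.2.1 * V z
        + z.2.1 ^ 2 / (3 * z.2.2 + 2) = c * z.2.2 + z.1)
    (hnd : ∀ z ∈ U, 2 * (3 * z.2.2 + 2) * V z + z.2.1 ≠ 0)
    (p a : ℝ × ℝ × ℝ → ℝ)
    (hp : p = fun z => -z.2.1 / (3 * z.2.2 + 2) - V z)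
    (ha : a = fun z => -c * V z * (V z + z.2.1 / (3 * z.2.2 + 2))) :
    ∀ z ∈ U, dY a z = 2 * dX (fun w => a w * (p w + V w)) z :=
  m2_source_equation_a_general c U hU V hV hT hrel p a hp ha
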